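/- arXiv:1201.5989 — 5 statements merged into one kernel-verified Lean document; each statement's English description precedes it below -/
import Mathlib

section
/- For n > k \geq 1, the lattice (additive subgroup of Z^n) generated by the vectors e_S for S ranging over all k-element subsets of [n] is exactly the set of integer vectors whose coordinate sum is divisible by k. -/
/-!
The sum of coordinates of every `e_S` is `k`, which gives one inclusion. Conversely, since
`k < n`, two `k`-sets `T ∪ {i}` and `T ∪ {j}` exist for any `i ≠ j`, so the lattice contains all
`e_i - e_j` and hence every vector of coordinate sum `0`. A vector `d` with coordinate sum `m k`
is then `m e_S` plus such a vector.
-/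

open Finset

section

variable {ι : Type*} [DecidableEq ι]

/-- The paper's `e_S`. -/
def indicatorVec (S : Finset ι) : ι → ℤ := fun i => if i ∈ S then 1 else 0

variable (ι) in
def uniformEdgeVecs (k : ℕ) : Set (ι → ℤ) :=
  {v | ∃ S : Finset ι, #S = k ∧ v = indicatorVec S}

theorem sum_indicatorVec [Fintype ι] (S : Finset ι) : ∑ i, indicatorVec S i = #S := by
  simp [indicatorVec]

theorem indicatorVec_insert_sub_indicatorVec_insert {S : Finset ι} {i j : ι} (hi : i ∉ S)
    (hj : j ∉ S) :
    indicatorVec (insert i S) - indicatorVec (insert j S) = Pi.single i 1 - Pi.single j 1 := by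
  ext l
  simp only [indicatorVec, Pi.sub_apply, Pi.single_apply, mem_insert]
  by_cases hli : l = i <;> by_cases hlj : l = j <;> by_cases hlS : l ∈ S <;> simp_all

end

section

variable {ι : Type*} [Fintype ι]

variable (ι) in
def sumDvdSubgroup (k : ℤ) : AddSubgroup (ι → ℤ) where
  carrier := {d | k ∣ ∑ i, d i}
  zero_mem' := by simp
  add_mem' {a b} ha hb := by simpa [sum_add_distrib] using dvd_add ha hb
  neg_mem' := by simp

theorem mem_sumDvdSubgroup {k : ℤ} {d : ι → ℤ} : d ∈ sumDvdSubgroup ι k ↔ k ∣ ∑ i, d i :=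
  Iff.rfl

variable [DecidableEq ι]

theorem closure_uniformEdgeVecs_le (k : ℕ) :
    AddSubgroup.closure (uniformEdgeVecs ι k) ≤ sumDvdSubgroup ι k := by
  rw [AddSubgroup.closure_le]
  rintro v ⟨S, rfl, rfl⟩
  simp [mem_sumDvdSubgroup, sum_indicatorVec]

theorem single_sub_single_mem_closure_uniformEdgeVecs {k : ℕ} (hk : 1 ≤ k)
    (hkι : k < Fintype.card ι) (i j : ι) :
    Pi.single i 1 - Pi.single j 1 ∈ AddSubgroup.closure (uniformEdgeVecs ι k) := by
  rcases eq_or_ne i j with rfl | hij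
  · simp
  obtain ⟨T, hT, hTcard⟩ := Finset.exists_subset_card_eq (s := univ \ {i, j}) (n := k - 1)
    (by rw [card_sdiff_of_subset (subset_univ _), card_pair hij, card_univ]; omega)
  have hi : i ∉ T := fun h => by simpa using hT h
  have hj : j ∉ T := fun h => by simpa using hT h
  have insert_mem (l : ι) (hl : l ∉ T) :
      indicatorVec (insert l T) ∈ AddSubgroup.closure (uniformEdgeVecs ι k) :=
    AddSubgroup.subset_closure ⟨insert l T, by rw [card_insert_of_notMem hl]; omega, rfl⟩
  rw [← indicatorVec_insert_sub_indicatorVec_insert hi hj]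
  exact sub_mem (insert_mem i hi) (insert_mem j hj)

theorem sum_smul_single_sub_single_of_sum_eq_zero {R : Type*} [Ring R] {c : ι → R}
    (hc : ∑ i, c i = 0) (j : ι) : ∑ i, c i • (Pi.single i 1 - Pi.single j 1) = c := by
  simp_rw [smul_sub, sum_sub_distrib, ← sum_smul, hc, zero_smul, sub_zero, ← Pi.single_smul',
    smul_eq_mul, mul_one, univ_sum_single]

theorem mem_of_sum_eq_zero_of_single_sub_single_mem {H : AddSubgroup (ι → ℤ)}
    (hH : ∀ i j : ι, Pi.single i 1 - Pi.single j 1 ∈ H) {c : ι → ℤ} (hc : ∑ i, c i = 0) :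
    c ∈ H := by
  cases isEmpty_or_nonempty ι
  · simp [Subsingleton.elim c 0]
  obtain ⟨j⟩ := ‹Nonempty ι›
  rw [← sum_smul_single_sub_single_of_sum_eq_zero hc j]
  exact sum_mem fun i _ => zsmul_mem (hH i j) _

theorem closure_uniformEdgeVecs {k : ℕ} (hk : 1 ≤ k) (hkι : k < Fintype.card ι) :
    AddSubgroup.closure (uniformEdgeVecs ι k) = sumDvdSubgroup ι k := by
  refine le_antisymm (closure_uniformEdgeVecs_le k) fun d ⟨m, hm⟩ => ?_
  obtain ⟨S, -, hS⟩ := exists_subset_card_eq (s := (univ : Finset ι)) (n := k)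
    (by rw [card_univ]; omega)
  have heS : indicatorVec S ∈ AddSubgroup.closure (uniformEdgeVecs ι k) :=
    AddSubgroup.subset_closure ⟨S, hS, rfl⟩
  have hsum : ∑ i, (d - m • indicatorVec S) i = 0 := by
    simp [sum_sub_distrib, ← mul_sum, sum_indicatorVec, hS, hm, mul_comm]
  have hrest := mem_of_sum_eq_zero_of_single_sub_single_mem
    (single_sub_single_mem_closure_uniformEdgeVecs hk hkι) hsum
  simpa using add_mem (zsmul_mem heS m) hrest

end

/-- For `n > k ≥ 1`, the additive subgroup of `ℤ^n` generated by the vectors `e_S`, for `S`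
ranging over the `k`-element subsets of `[n]`, is exactly the set of integer vectors whose
coordinate sum is divisible by `k`. -/
theorem lattice_of_uniform_edges (n k : ℕ) (hk : 1 ≤ k) (hkn : k < n) (d : Fin n → ℤ) :
    d ∈ AddSubgroup.closure
        {v : Fin n → ℤ | ∃ S : Finset (Fin n), S.card = k ∧
          v = fun i => if i ∈ S then 1 else 0} ↔
      (k : ℤ) ∣ ∑ i, d i := by
  have h := closure_uniformEdgeVecs (ι := Fin n) hk (by simpa using hkn)
  exact SetLike.ext_iff.mp h d
end

section
/- Let K be a finite collection of k-subsets of [n], w \in R^n, K^+ = {S \in K : w \cdot e_S > 0}, K^0 = {S \in K : w \cdot e_S = 0}, and t = \sum_{S \in K^+} e_S. Then a point q \in R^n satisfies: q is in the w-maximizing face of D(K) and q is a degree sequence of a subcollection of K, if and only if q - t is in D(K^0) and q - t is a degree sequence of a subcollection of K^0. -/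
open scoped Classical

/-- The indicator vector of a subset `S` of `[n]`. -/
noncomputable def eS (n : ℕ) (S : Finset (Fin n)) : Fin n → ℝ :=
  fun i => if i ∈ S then 1 else 0

/-- The zonotope generated by the hyperedges of `K`. -/
noncomputable def zono (n : ℕ) (K : Finset (Finset (Fin n))) : Set (Fin n → ℝ) :=
  {x | ∃ c : Finset (Fin n) → ℝ, (∀ S, 0 ≤ c S ∧ c S ≤ 1) ∧ x = ∑ S ∈ K, c S • eS n S}

/-- The dot product of two vectors in `ℝ^n`. -/
noncomputable def dot (n : ℕ) (w x : Fin n → ℝ) : ℝ := ∑ i, w i * x i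

/-- `x` is the degree sequence of a subcollection of `K`. -/
def IsDegSeqOf (n : ℕ) (K : Finset (Finset (Fin n))) (x : Fin n → ℝ) : Prop :=
  ∃ K' ⊆ K, x = ∑ S ∈ K', eS n S

/-!
Writing `d S = w ⬝ e_S`, every point `∑ c_S e_S` of `D(K)` has `w`-value `∑ c_S d_S ≤ ∑_{K⁺} d_S`,
and `t` attains this bound, so the maximizing face is where `w ⬝ q = ∑_{K⁺} d_S`. A degree
sequence `∑_{K'} e_S` reaches this value exactly when `K⁺ ⊆ K'` and `K'` avoids the sets with
`d_S < 0`, i.e. when `K' = K⁺ ∪ K''` with `K'' ⊆ K⁰`; then `q - t = ∑_{K''} e_S`.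
-/

section Weights

variable {ι : Type*} {B : Finset ι} {f : ι → ℝ}

theorem Finset.sum_mul_le_sum_filter_pos {c : ι → ℝ} (hc : ∀ i, 0 ≤ c i ∧ c i ≤ 1) :
    ∑ i ∈ B, c i * f i ≤ ∑ i ∈ B.filter (fun i => 0 < f i), f i := by
  rw [Finset.sum_filter]
  refine Finset.sum_le_sum fun i _ => ?_
  obtain ⟨hc0, hc1⟩ := hc i
  split_ifs with hf
  · nlinarith
  · nlinarith

theorem Finset.sum_eq_sum_filter_pos_iff {A : Finset ι} (hA : A ⊆ B) :
    ∑ i ∈ A, f i = ∑ i ∈ B.filter (fun i => 0 < f i), f i ↔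
      B.filter (fun i => 0 < f i) ⊆ A ∧ ∀ i ∈ A, 0 ≤ f i := by
  set P := B.filter (fun i => 0 < f i)
  have hpos : ∀ i ∈ P, 0 < f i := fun i hi => (Finset.mem_filter.mp hi).2
  have hnonpos : ∀ i ∈ A \ P, f i ≤ 0 := fun i hi => not_lt.mp fun h =>
    (Finset.mem_sdiff.mp hi).2 (Finset.mem_filter.mpr ⟨hA (Finset.mem_sdiff.mp hi).1, h⟩)
  -- Equality forces both the loss on `P \ A` (≥ 0) and the gain on `A \ P` (≤ 0) to vanish.
  have hsplit : ∑ i ∈ A, f i = ∑ i ∈ P, f i - ∑ i ∈ P \ A, f i + ∑ i ∈ A \ P, f i := by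
    rw [← Finset.sum_inter_add_sum_sdiff A P, ← Finset.sum_inter_add_sum_sdiff P A,
      Finset.inter_comm]
    ring
  have hPA : 0 ≤ ∑ i ∈ P \ A, f i :=
    Finset.sum_nonneg fun i hi => (hpos i (Finset.mem_sdiff.mp hi).1).le
  have hAP : ∑ i ∈ A \ P, f i ≤ 0 := Finset.sum_nonpos hnonpos
  constructor
  · intro h
    have hPA0 : ∑ i ∈ P \ A, f i = 0 := by linarith
    have hAP0 : ∑ i ∈ A \ P, f i = 0 := by linarith
    refine ⟨fun i hi => ?_, fun i hi => ?_⟩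
    · by_contra hiA
      have := (Finset.sum_eq_zero_iff_of_nonneg fun j hj =>
        (hpos j (Finset.mem_sdiff.mp hj).1).le).mp hPA0 i (Finset.mem_sdiff.mpr ⟨hi, hiA⟩)
      exact (hpos i hi).ne' this
    · by_cases hiP : i ∈ P
      · exact (hpos i hiP).le
      · exact ((Finset.sum_eq_zero_iff_of_nonpos hnonpos).mp hAP0 i
          (Finset.mem_sdiff.mpr ⟨hi, hiP⟩)).ge
  · rintro ⟨hPsub, hnonneg⟩
    rw [hsplit, Finset.sdiff_eq_empty_iff_subset.mpr hPsub, Finset.sum_empty,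
      Finset.sum_eq_zero fun i hi =>
        le_antisymm (hnonpos i hi) (hnonneg i (Finset.mem_sdiff.mp hi).1)]
    ring

theorem exists_subset_eq_filter_pos_union_iff {M : Type*} [AddCommGroup M] (v : ι → M) (x : M) :
    (∃ A ⊆ B, (B.filter (fun i => 0 < f i) ⊆ A ∧ ∀ i ∈ A, 0 ≤ f i) ∧ x = ∑ i ∈ A, v i) ↔
      ∃ A ⊆ B.filter (fun i => f i = 0), x - ∑ i ∈ B.filter (fun i => 0 < f i), v i =
        ∑ i ∈ A, v i := by
  constructor
  · rintro ⟨A, hAB, ⟨hPA, hnonneg⟩, rfl⟩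
    refine ⟨A \ B.filter (fun i => 0 < f i), fun i hi => ?_, ?_⟩
    · obtain ⟨hiA, hiP⟩ := Finset.mem_sdiff.mp hi
      refine Finset.mem_filter.mpr ⟨hAB hiA, le_antisymm ?_ (hnonneg i hiA)⟩
      exact not_lt.mp fun h => hiP (Finset.mem_filter.mpr ⟨hAB hiA, h⟩)
    · rw [sub_eq_iff_eq_add', add_comm, Finset.sum_sdiff hPA]
  · rintro ⟨A, hAZ, hx⟩
    have hdisj : Disjoint (B.filter (fun i => 0 < f i)) A := Finset.disjoint_left.mpr
      fun i hiP hiA => (Finset.mem_filter.mp hiP).2.ne' (Finset.mem_filter.mp (hAZ hiA)).2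
    refine ⟨B.filter (fun i => 0 < f i) ∪ A,
      Finset.union_subset (Finset.filter_subset _ _) (hAZ.trans (Finset.filter_subset _ _)),
      ⟨Finset.subset_union_left, fun i hi => ?_⟩, ?_⟩
    · rcases Finset.mem_union.mp hi with hiP | hiA
      · exact (Finset.mem_filter.mp hiP).2.le
      · exact (Finset.mem_filter.mp (hAZ hiA)).2.ge
    · rw [Finset.sum_union hdisj, ← hx, add_sub_cancel]

end Weights

section Zonotope

variable {n : ℕ} {K : Finset (Finset (Fin n))} {w : Fin n → ℝ}

theorem dot_eq_dotProduct (w x : Fin n → ℝ) : dot n w x = w ⬝ᵥ x := rfl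

theorem IsDegSeqOf.mem_zono {x : Fin n → ℝ} (h : IsDegSeqOf n K x) : x ∈ zono n K := by
  obtain ⟨K', hK', rfl⟩ := h
  refine ⟨fun S => if S ∈ K' then 1 else 0, fun S => by dsimp only; split_ifs <;> norm_num, ?_⟩
  simp only [ite_smul, one_smul, zero_smul]
  rw [Finset.sum_ite_mem, Finset.inter_eq_right.mpr hK']

theorem dot_sum_eS (K' : Finset (Finset (Fin n))) :
    dot n w (∑ S ∈ K', eS n S) = ∑ S ∈ K', dot n w (eS n S) :=
  dotProduct_sum w K' (eS n)

theorem dot_le_of_mem_zono {y : Fin n → ℝ} (hy : y ∈ zono n K) :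
    dot n w y ≤ ∑ S ∈ K.filter (fun S => 0 < dot n w (eS n S)), dot n w (eS n S) := by
  obtain ⟨c, hc, rfl⟩ := hy
  simp only [dot_eq_dotProduct, dotProduct_sum, dotProduct_smul, smul_eq_mul]
  exact Finset.sum_mul_le_sum_filter_pos hc

theorem isMaxOn_zono_iff {q : Fin n → ℝ} (hq : q ∈ zono n K) :
    (∀ y ∈ zono n K, dot n w y ≤ dot n w q) ↔
      dot n w q = ∑ S ∈ K.filter (fun S => 0 < dot n w (eS n S)), dot n w (eS n S) := by
  refine ⟨fun hmax => le_antisymm (dot_le_of_mem_zono hq) ?_,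
    fun h y hy => h ▸ dot_le_of_mem_zono hy⟩
  have ht : IsDegSeqOf n K (∑ S ∈ K.filter (fun S => 0 < dot n w (eS n S)), eS n S) :=
    ⟨_, Finset.filter_subset _ _, rfl⟩
  exact (dot_sum_eS _).symm.le.trans (hmax _ ht.mem_zono)

theorem isMaxOn_zono_and_isDegSeqOf_iff {q : Fin n → ℝ} :
    ((q ∈ zono n K ∧ ∀ y ∈ zono n K, dot n w y ≤ dot n w q) ∧ IsDegSeqOf n K q) ↔
      ∃ K' ⊆ K, ((K.filter (fun S => 0 < dot n w (eS n S)) ⊆ K' ∧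
        ∀ S ∈ K', 0 ≤ dot n w (eS n S)) ∧ q = ∑ S ∈ K', eS n S) := by
  constructor
  · rintro ⟨⟨hq, hmax⟩, K', hK', rfl⟩
    rw [isMaxOn_zono_iff hq, dot_sum_eS, Finset.sum_eq_sum_filter_pos_iff hK'] at hmax
    exact ⟨K', hK', hmax, rfl⟩
  · rintro ⟨K', hK', hopt, rfl⟩
    have hq : IsDegSeqOf n K (∑ S ∈ K', eS n S) := ⟨K', hK', rfl⟩
    rw [isMaxOn_zono_iff hq.mem_zono, dot_sum_eS, Finset.sum_eq_sum_filter_pos_iff hK']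
    exact ⟨⟨hq.mem_zono, hopt⟩, hq⟩

end Zonotope

theorem face_point_degree_sequence_iff_general (n : ℕ) (K : Finset (Finset (Fin n)))
    (w : Fin n → ℝ) (q : Fin n → ℝ) :
    ((q ∈ zono n K ∧ ∀ y ∈ zono n K, dot n w y ≤ dot n w q) ∧ IsDegSeqOf n K q) ↔
      ((q - ∑ S ∈ K.filter (fun S => 0 < dot n w (eS n S)), eS n S) ∈
          zono n (K.filter (fun S => dot n w (eS n S) = 0)) ∧
        IsDegSeqOf n (K.filter (fun S => dot n w (eS n S) = 0))
          (q - ∑ S ∈ K.filter (fun S => 0 < dot n w (eS n S)), eS n S)) := by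
  rw [isMaxOn_zono_and_isDegSeqOf_iff, exists_subset_eq_filter_pos_union_iff]
  exact ⟨fun h => ⟨IsDegSeqOf.mem_zono h, h⟩, And.right⟩

/-- A point `q` lies in the `w`-maximizing face of `D(K)` and is a degree sequence of a
subcollection of `K` if and only if `q - t` lies in `D(K⁰)` and is a degree sequence of a
subcollection of `K⁰`, where `t = ∑_{S ∈ K⁺} e_S`. -/
theorem face_point_degree_sequence_iff (n k : ℕ) (K : Finset (Finset (Fin n)))
    (hK : ∀ S ∈ K, S.card = k) (w : Fin n → ℝ) (q : Fin n → ℝ) :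
    ((q ∈ zono n K ∧ ∀ y ∈ zono n K, dot n w y ≤ dot n w q) ∧ IsDegSeqOf n K q) ↔
      ((q - ∑ S ∈ K.filter (fun S => 0 < dot n w (eS n S)), eS n S) ∈
          zono n (K.filter (fun S => dot n w (eS n S) = 0)) ∧
        IsDegSeqOf n (K.filter (fun S => dot n w (eS n S) = 0))
          (q - ∑ S ∈ K.filter (fun S => 0 < dot n w (eS n S)), eS n S)) :=
  face_point_degree_sequence_iff_general n K w q
end

section
/- Define f: R^n \to R^{n+1} by f(d_1,...,d_n) = (d_1,...,d_n, (d_1+...+d_n)/k). A vector d \in Z^n is the degree sequence of a k-uniform hypergraph on [n] if and only if f(d) is the degree sequence of a (k+1)-uniform hypergraph on [n+1]. -/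
/-!
Coning off a hypergraph with the new apex `n + 1`, `S ↦ S ∪ {n + 1}`, turns a `k`-uniform
hypergraph `K` on `[n]` into a `(k + 1)`-uniform one with the same degrees on `[n]`, and the apex
has degree `|K| = (d₁ + ⋯ + dₙ) / k` by double counting. Conversely, if a `(k + 1)`-uniform `K'`
realizes `f(d)`, double counting gives `(k + 1) |K'| = (d₁ + ⋯ + dₙ) + d_{n+1} = (k + 1) d_{n+1}`,
so every edge of `K'` contains the apex and `K'` is the cone over the hypergraph of its links.
-/

/-- `d` is the degree sequence of a `k`-uniform hypergraph on `[n]`. -/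
def IsDegSeq (n k : ℕ) (d : Fin n → ℤ) : Prop :=
  ∃ K : Finset (Finset (Fin n)), (∀ S ∈ K, S.card = k) ∧
    ∀ i, d i = ((K.filter (fun S => i ∈ S)).card : ℤ)

open Finset

theorem Finset.sum_card_filter_mem {α : Type*} [Fintype α] [DecidableEq α]
    (K : Finset (Finset α)) :
    ∑ a, #{S ∈ K | a ∈ S} = ∑ S ∈ K, #S := by
  simp only [card_filter]
  rw [sum_comm]
  simp

theorem Finset.sum_card_filter_mem_of_card_eq {α : Type*} [Fintype α] [DecidableEq α]
    {K : Finset (Finset α)} {k : ℕ} (hK : ∀ S ∈ K, #S = k) : ∑ a, #{S ∈ K | a ∈ S} = k * #K := by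
  rw [sum_card_filter_mem, sum_congr rfl hK, sum_const, smul_eq_mul, mul_comm]

namespace Fin

variable {n : ℕ}

def cone (S : Finset (Fin n)) : Finset (Fin (n + 1)) :=
  (S.map castSuccEmb).cons (last n) (by simp [castSucc_ne_last])

@[simp]
theorem last_mem_cone (S : Finset (Fin n)) : last n ∈ cone S := mem_cons_self _ _

@[simp]
theorem castSucc_mem_cone {S : Finset (Fin n)} {i : Fin n} : castSucc i ∈ cone S ↔ i ∈ S := by
  simp [cone, castSucc_ne_last]

@[simp]
theorem card_cone (S : Finset (Fin n)) : #(cone S) = #S + 1 := by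
  simp [cone]

theorem cone_injective : Function.Injective (cone (n := n)) := fun S T h ↦ by
  ext i; rw [← castSucc_mem_cone, h, castSucc_mem_cone]

@[simps]
def coneEmb : Finset (Fin n) ↪ Finset (Fin (n + 1)) := ⟨cone, cone_injective⟩

theorem cone_preimage_castSucc {T : Finset (Fin (n + 1))} (h : last n ∈ T) :
    cone (T.preimage castSucc (castSucc_injective n).injOn) = T := by
  ext j
  cases j using lastCases <;> simp [h]

theorem card_filter_castSucc_mem_map_cone (K : Finset (Finset (Fin n))) (i : Fin n) :
    #{T ∈ K.map coneEmb | castSucc i ∈ T} = #{S ∈ K | i ∈ S} := by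
  simp [filter_map]

theorem card_filter_last_mem_map_cone (K : Finset (Finset (Fin n))) :
    #{T ∈ K.map coneEmb | last n ∈ T} = #K := by
  rw [filter_true_of_mem (by simp), card_map]

theorem exists_map_cone_eq {K : Finset (Finset (Fin (n + 1)))} (h : ∀ T ∈ K, last n ∈ T) :
    ∃ L : Finset (Finset (Fin n)), L.map coneEmb = K := by
  refine ⟨K.image fun T ↦ T.preimage castSucc (castSucc_injective n).injOn, ?_⟩
  rw [map_eq_image, image_image]
  exact (image_congr fun T hT ↦ cone_preimage_castSucc (h T hT)).trans image_id

end Fin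

open Fin in
theorem isDegSeq_snoc_card {n k : ℕ} {K : Finset (Finset (Fin n))} (hK : ∀ S ∈ K, #S = k) :
    IsDegSeq (n + 1) (k + 1) (snoc (fun i ↦ (#{S ∈ K | i ∈ S} : ℤ)) #K) := by
  refine ⟨K.map coneEmb, by simpa using hK, fun j ↦ ?_⟩
  cases j using lastCases with
  | last => rw [snoc_last, card_filter_last_mem_map_cone]
  | cast i => rw [snoc_castSucc, card_filter_castSucc_mem_map_cone]

open Fin in
theorem card_filter_last_mem_eq_card {n k : ℕ} {K : Finset (Finset (Fin (n + 1)))}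
    (hK : ∀ T ∈ K, #T = k + 1)
    (h : #{T ∈ K | last n ∈ T} * k = ∑ i : Fin n, #{T ∈ K | castSucc i ∈ T}) :
    #{T ∈ K | last n ∈ T} = #K := by
  have hsum := sum_card_filter_mem_of_card_eq hK
  rw [sum_univ_castSucc, ← h, ← mul_add_one, mul_comm] at hsum
  exact Nat.eq_of_mul_eq_mul_left k.succ_pos hsum

/-- With `f(d₁,…,dₙ) = (d₁,…,dₙ,(d₁+⋯+dₙ)/k)`, a vector `d ∈ ℤ^n` is the degree sequence of
a `k`-uniform hypergraph on `[n]` if and only if `f(d)` is the degree sequence of a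
`(k+1)`-uniform hypergraph on `[n+1]`. -/
theorem isDegSeq_iff_snoc (n k : ℕ) (hk : 0 < k) (d : Fin n → ℤ) :
    IsDegSeq n k d ↔
      ∃ d' : Fin (n + 1) → ℤ, IsDegSeq (n + 1) (k + 1) d' ∧
        (∀ i : Fin n, d' i.castSucc = d i) ∧
        ((d' (Fin.last n) : ℝ) = (∑ i, (d i : ℝ)) / k) := by
  have hk₀ : (k : ℝ) ≠ 0 := by positivity
  constructor
  · rintro ⟨K, hK, hd⟩
    obtain rfl : d = fun i ↦ (#{S ∈ K | i ∈ S} : ℤ) := funext hd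
    refine ⟨_, isDegSeq_snoc_card hK, fun i ↦ Fin.snoc_castSucc .., ?_⟩
    rw [Fin.snoc_last, eq_div_iff hk₀]
    exact_mod_cast ((sum_card_filter_mem_of_card_eq hK).trans (mul_comm _ _)).symm
  · rintro ⟨d', ⟨K', hK', hd'⟩, hd, hlast⟩
    simp only [← hd, hd', eq_div_iff hk₀] at hlast
    have hcone := card_filter_eq_iff.mp (card_filter_last_mem_eq_card hK' (by exact_mod_cast hlast))
    obtain ⟨K, rfl⟩ := Fin.exists_map_cone_eq hcone
    refine ⟨K, fun S hS ↦ by simpa using hK' _ (mem_map_of_mem _ hS), fun i ↦ ?_⟩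
    rw [← hd, hd', Fin.card_filter_castSucc_mem_map_cone]
end

section
/- Suppose p = \sum_{S \in K} e_S where K is a set of triples (q,r,s) with q \in [5], r,s \in [6], and p has tripartite degree sequence ((11,9,6,3,1),(2,4,6,8,3,7),(2,4,6,8,3,7)). Define b_{rs} = |{q : (q,r,s) \in K}|. Then B = (b_{rs}) has row and column sums both equal to (2,4,6,8,3,7), all entries in {0,...,5}, and for each q \in [5], \mu_1+...+\mu_q \leq \sum_{r,s} \min(q, b_{rs}) where \mu = (11,9,6,3,1). -/
/-!
Each entry `b_{rs}` counts the triples of `K` above the cell `(r, s)`, so summing a row or a column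
of `B` recovers a degree of `K`. Since `K` is a set, a cell carries at most one triple per `q`;
hence the triples of the cell with first coordinate in a set `Q` number at most `min(|Q|, b_{rs})`,
and summing over the cells with `Q = {q' < q}` bounds `μ₁ + ⋯ + μ_q`.
-/

def μ : Fin 5 → ℕ := ![11, 9, 6, 3, 1]

def v : Fin 6 → ℕ := ![2, 4, 6, 8, 3, 7]

open Finset

section TripartiteFibres

variable {α β γ : Type*} (K : Finset (α × β × γ))

theorem sum_card_filter_cell_eq_card_filter_row [DecidableEq β] [DecidableEq γ] [Fintype γ]
    (r : β) :
    ∑ s : γ, #{t ∈ K | t.2.1 = r ∧ t.2.2 = s} = #{t ∈ K | t.2.1 = r} := by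
  simpa only [filter_filter, mem_univ, and_true] using
    sum_card_fiberwise_eq_card_filter {t ∈ K | t.2.1 = r} univ (fun t => t.2.2)

theorem sum_card_filter_cell_eq_card_filter_col [DecidableEq β] [DecidableEq γ] [Fintype β]
    (s : γ) :
    ∑ r : β, #{t ∈ K | t.2.1 = r ∧ t.2.2 = s} = #{t ∈ K | t.2.2 = s} := by
  convert sum_card_fiberwise_eq_card_filter {t ∈ K | t.2.2 = s} univ (fun t => t.2.1) using 2
  · rw [filter_filter]
    simp only [and_comm]
  · simp only [mem_univ, filter_true]

theorem card_filter_fst_mem_cell_le [DecidableEq α] [DecidableEq β] [DecidableEq γ]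
    (Q : Finset α) (r : β) (s : γ) :
    #{t ∈ K | t.1 ∈ Q ∧ t.2.1 = r ∧ t.2.2 = s} ≤ #Q := by
  refine card_le_card_of_injOn Prod.fst (fun t ht => (mem_filter.1 ht).2.1) ?_
  rintro ⟨a, b, c⟩ ha ⟨a', b', c'⟩ hb rfl
  simp only [coe_filter, Set.mem_ofPred_eq] at ha hb
  obtain ⟨-, -, rfl, rfl⟩ := ha
  obtain ⟨-, -, rfl, rfl⟩ := hb
  rfl

theorem card_filter_cell_le_card [DecidableEq β] [DecidableEq γ] [Fintype α] (r : β) (s : γ) :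
    #{t ∈ K | t.2.1 = r ∧ t.2.2 = s} ≤ Fintype.card α := by
  classical
  simpa using card_filter_fst_mem_cell_le K univ r s

theorem sum_card_filter_fst_le_sum_min [DecidableEq α] [DecidableEq β] [DecidableEq γ]
    [Fintype β] [Fintype γ] (Q : Finset α) :
    ∑ j ∈ Q, #{t ∈ K | t.1 = j} ≤
      ∑ r : β, ∑ s : γ, min #Q #{t ∈ K | t.2.1 = r ∧ t.2.2 = s} := by
  calc ∑ j ∈ Q, #{t ∈ K | t.1 = j}
      = ∑ r : β, ∑ s : γ, #{t ∈ K | t.1 ∈ Q ∧ t.2.1 = r ∧ t.2.2 = s} := by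
        rw [sum_card_fiberwise_eq_card_filter,
          card_eq_sum_card_fiberwise (f := fun t => t.2.1) (t := univ) fun _ _ => mem_univ _]
        simp_rw [← sum_card_filter_cell_eq_card_filter_row, filter_filter]
    _ ≤ _ := by
        gcongr with r _ s _
        exact le_min (card_filter_fst_mem_cell_le K Q r s)
          (card_le_card (monotone_filter_right K fun _ _ h => h.2))

end TripartiteFibres

/-- If `K` is a `3`-partite `3`-uniform hypergraph on parts `[5], [6], [6]` with tripartite
degree sequence `((11,9,6,3,1),(2,4,6,8,3,7),(2,4,6,8,3,7))`, and
`b_{rs} = #{q : (q,r,s) ∈ K}`, then `B` has row and column sums `(2,4,6,8,3,7)`, entries in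
`{0,…,5}`, and `μ₁+⋯+μ_q ≤ ∑_{r,s} min(q, b_{rs})` for each `q ∈ [5]`. -/
theorem degree_matrix_conditions (K : Finset (Fin 5 × Fin 6 × Fin 6))
    (h1 : ∀ q : Fin 5, (K.filter (fun t => t.1 = q)).card = μ q)
    (h2 : ∀ r : Fin 6, (K.filter (fun t => t.2.1 = r)).card = v r)
    (h3 : ∀ s : Fin 6, (K.filter (fun t => t.2.2 = s)).card = v s) :
    (∀ r : Fin 6, ∑ s : Fin 6,
        (K.filter (fun t => t.2.1 = r ∧ t.2.2 = s)).card = v r) ∧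
    (∀ s : Fin 6, ∑ r : Fin 6,
        (K.filter (fun t => t.2.1 = r ∧ t.2.2 = s)).card = v s) ∧
    (∀ r s : Fin 6, (K.filter (fun t => t.2.1 = r ∧ t.2.2 = s)).card ≤ 5) ∧
    (∀ q : ℕ, q ≤ 5 →
      (∑ j ∈ Finset.univ.filter (fun j : Fin 5 => j.val < q), μ j) ≤
        ∑ r : Fin 6, ∑ s : Fin 6,
          min q (K.filter (fun t => t.2.1 = r ∧ t.2.2 = s)).card) := by
  refine ⟨fun r => by rw [sum_card_filter_cell_eq_card_filter_row, h2],
    fun s => by rw [sum_card_filter_cell_eq_card_filter_col, h3],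
    fun r s => card_filter_cell_le_card K r s, fun q _ => ?_⟩
  set Q := Finset.univ.filter (fun j : Fin 5 => j.val < q)
  have hQ : #Q ≤ q := Fin.card_filter_val_lt.trans_le (min_le_right _ _)
  calc ∑ j ∈ Q, μ j = ∑ j ∈ Q, #{t ∈ K | t.1 = j} := by simp only [h1]
    _ ≤ ∑ r : Fin 6, ∑ s : Fin 6, min #Q #{t ∈ K | t.2.1 = r ∧ t.2.2 = s} :=
        sum_card_filter_fst_le_sum_min K Q
    _ ≤ _ := by gcongr
end

section
/- Let W_1,...,W_k be finite disjoint vertex sets and N an integer larger than each |W_i|. Assign weight -(1+N+N^2+...+N^{k-2}) to each vertex of W_1 and weight N^{i-2} to each vertex of W_i for 2 \leq i \leq k. Then a k-subset S of W_1 \cup ... \cup W_k has total weight 0 if and only if S contains exactly one vertex from each W_i. -/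
/-!
Let `c i` be the number of vertices that `S` takes from `W_i`. Collecting the total weight by
powers of `N` gives `∑_{j < k-1} (c_{j+2} - c_1) N^j`, a base-`N` expansion whose digits satisfy
`|c_{j+2} - c_1| < N` because `0 ≤ c_i ≤ |W_i| < N`. Such an expansion vanishes only if every
digit does, i.e. only if all `c_i` are equal; as they sum to `|S| = k`, they all equal `1`.
-/

open Finset

theorem Int.sum_mul_pow_eq_zero_iff {N : ℤ} {n : ℕ} {d : Fin n → ℤ} (hd : ∀ j, |d j| < N) :
    ∑ j, d j * N ^ (j : ℕ) = 0 ↔ ∀ j, d j = 0 := by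
  refine ⟨fun h => ?_, fun h => by simp [h]⟩
  induction n with
  | zero => exact finZeroElim
  | succ n ih =>
    have hN : N ≠ 0 := ((abs_nonneg _).trans_lt (hd 0)).ne'
    have hsplit : ∑ j : Fin (n + 1), d j * N ^ (j : ℕ) =
        d 0 + N * ∑ j : Fin n, d j.succ * N ^ (j : ℕ) := by
      simp only [Fin.sum_univ_succ, Fin.val_zero, pow_zero, mul_one, Fin.val_succ, pow_succ,
        mul_sum]
      congr 1
      exact sum_congr rfl fun j _ => by ring
    rw [hsplit] at h
    have h0 : d 0 = 0 := Int.eq_zero_of_abs_lt_dvd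
      (by rw [eq_neg_of_add_eq_zero_left h]; exact (dvd_mul_right _ _).neg_right) (hd 0)
    rw [h0, zero_add, mul_eq_zero, or_iff_right hN] at h
    exact Fin.cases h0 (ih (fun j => hd j.succ) h)

/-- The weight of a vertex of `W_{i+1}` when there are `k = n + 1` classes. -/
def vertexWeight {R : Type*} [CommRing R] (N : R) (n : ℕ) (i : Fin (n + 1)) : R :=
  if i = 0 then -∑ j ∈ range n, N ^ j else N ^ (i.val - 1)

theorem sum_mul_vertexWeight {R : Type*} [CommRing R] {n : ℕ} (N : R) (c : Fin (n + 1) → R) :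
    ∑ i, c i * vertexWeight N n i = ∑ j : Fin n, (c j.succ - c 0) * N ^ (j : ℕ) := by
  simp only [vertexWeight, Fin.sum_univ_succ, if_pos, Fin.succ_ne_zero, if_false, Fin.val_succ,
    Nat.add_sub_cancel, ← Fin.sum_univ_eq_sum_range, sub_mul, sum_sub_distrib]
  rw [mul_neg, mul_sum]
  ring

theorem Finset.card_filter_fst_eq_le_card {ι : Type*} {β : ι → Type*} [DecidableEq ι]
    [∀ i, Fintype (β i)] (S : Finset (Σ i, β i)) (i : ι) :
    #{v ∈ S | v.1 = i} ≤ Fintype.card (β i) := by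
  rw [← card_univ, ← card_map (Function.Embedding.sigmaMk i)]
  refine card_le_card fun v hv => ?_
  obtain ⟨j, x⟩ := v
  obtain rfl : j = i := (mem_filter.1 hv).2
  simp

theorem forall_eq_iff_forall_eq_one_of_sum_eq_card {ι : Type*} [Fintype ι] {c : ι → ℕ}
    (hc : ∑ i, c i = Fintype.card ι) (i₀ : ι) : (∀ i, c i = c i₀) ↔ ∀ i, c i = 1 := by
  refine ⟨fun h => ?_, fun h i => by rw [h, h]⟩
  have hsum : ∑ i, c i = Fintype.card ι * c i₀ := by
    rw [sum_congr rfl fun i _ => h i, sum_const, card_univ, smul_eq_mul]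
  have hc₀ : c i₀ = 1 :=
    Nat.eq_of_mul_eq_mul_left (Fintype.card_pos_iff.2 ⟨i₀⟩) (by rw [← hsum, hc, mul_one])
  exact fun i => (h i).trans hc₀

/-- Let `W₁,…,W_k` be disjoint finite vertex sets (of sizes `m i`) and `N` an integer
larger than each `|W_i|`. Give each vertex of `W₁` weight `-(1+N+⋯+N^{k-2})` and each
vertex of `W_i` weight `N^{i-2}` for `2 ≤ i ≤ k`. Then a `k`-subset `S` of the vertices has
total weight `0` if and only if it contains exactly one vertex from each `W_i`. -/
theorem weight_zero_iff_transversal (k : ℕ) (hk : 2 ≤ k) (m : Fin k → ℕ) (N : ℤ)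
    (hN : ∀ i, (m i : ℤ) < N)
    (S : Finset (Σ i : Fin k, Fin (m i))) (hS : S.card = k) :
    (∑ v ∈ S, (if v.1 = (⟨0, by omega⟩ : Fin k) then -(∑ j ∈ Finset.range (k - 1), N ^ j)
        else N ^ (v.1.val - 1))) = 0 ↔
      ∀ i : Fin k, (S.filter (fun v => v.1 = i)).card = 1 := by
  obtain ⟨n, rfl⟩ : ∃ n, k = n + 1 := ⟨k - 1, by omega⟩
  change ∑ v ∈ S, vertexWeight N n v.1 = 0 ↔ _
  rw [← sum_fiberwise' S Sigma.fst]
  simp only [sum_const, nsmul_eq_mul]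
  set c : Fin (n + 1) → ℕ := fun i => #{v ∈ S | v.1 = i}
  have hcN (i) : (c i : ℤ) < N :=
    (Nat.cast_le.2 ((card_filter_fst_eq_le_card S i).trans_eq (Fintype.card_fin _))).trans_lt
      (hN i)
  have hc_sum : ∑ i, c i = Fintype.card (Fin (n + 1)) :=
    (card_eq_sum_card_fiberwise fun v _ => mem_univ v.1).symm.trans
      (hS.trans (Fintype.card_fin _).symm)
  rw [sum_mul_vertexWeight, Int.sum_mul_pow_eq_zero_iff fun j => abs_sub_lt_of_nonneg_of_lt
    (Nat.cast_nonneg _) (hcN _) (Nat.cast_nonneg _) (hcN 0)]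
  simp only [sub_eq_zero, Nat.cast_inj]
  rw [← forall_eq_iff_forall_eq_one_of_sum_eq_card hc_sum 0, Fin.forall_fin_succ]
  exact (and_iff_right rfl).symm
end
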